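/- Under the bijection mapping each column of 3 bits to a GF(8) symbol and the partition of GF(8) symbols into pairs {β,β⁴}→0, {1,β⁵}→1, {β²,β³}→α, {0,β⁶}→α², a sequence of 3-bit columns contains one of the two forbidden column triples ((000),(010),(000)) or ((111),(101),(111)) only if the corresponding GF(4) sequence contains the consecutive triple (α²,0,α²); equivalently, avoiding (α²,0,α²) in GF(4) guarantees avoiding both square-isolation patterns. -/
import Mathlib


/-- A column of 3 bits `(b₂, b₁, b₀)` identified with its GF(8) symbol `4b₂ + 2b₁ + b₀`. -/
def colVal (b : Fin 2 × Fin 2 × Fin 2) : Fin 8 :=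
  ⟨4 * (b.1 : ℕ) + 2 * (b.2.1 : ℕ) + (b.2.2 : ℕ), by
    have := b.1.isLt; have := b.2.1.isLt; have := b.2.2.isLt; omega⟩

/-- The map GF(8) → GF(4) given by the pairing {β,β⁴}→0, {1,β⁵}→1, {β²,β³}→α, {0,β⁶}→α²,
with GF(4) symbols 0,1,α,α² encoded as 0,1,2,3, and GF(8) symbols having the binary column
representations of the paper: 0 ↦ 000, 1 ↦ 001, β ↦ 010, β² ↦ 011, β³ ↦ 100, β⁴ ↦ 101,
β⁵ ↦ 110, β⁶ ↦ 111. -/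
def fmap : Fin 8 → Fin 4 := ![3, 1, 0, 2, 2, 0, 1, 3]

theorem stmt_14 (m : ℕ) (c : Fin m → Fin 2 × Fin 2 × Fin 2)
    (h : ∀ i j k : Fin m, (j : ℕ) = (i : ℕ) + 1 → (k : ℕ) = (i : ℕ) + 2 →
      ¬(fmap (colVal (c i)) = 3 ∧ fmap (colVal (c j)) = 0 ∧ fmap (colVal (c k)) = 3)) :
    ∀ i j k : Fin m, (j : ℕ) = (i : ℕ) + 1 → (k : ℕ) = (i : ℕ) + 2 →
      ¬(c i = (0, 0, 0) ∧ c j = (0, 1, 0) ∧ c k = (0, 0, 0)) ∧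
      ¬(c i = (1, 1, 1) ∧ c j = (1, 0, 1) ∧ c k = (1, 1, 1)) := by
  intro i j k hj hk
  refine ⟨fun ⟨h1, h2, h3⟩ => h i j k hj hk ?_, fun ⟨h1, h2, h3⟩ => h i j k hj hk ?_⟩ <;>
    simp [h1, h2, h3, colVal, fmap] <;> decide
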